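/- arXiv:1311.3696 — 4 statements merged into one kernel-verified Lean document; each statement's English description precedes it below -/
import Mathlib

section
/- Let T be a locally compact second countable (lcsc) group, Γ a closed subgroup of T, and X = T/Γ endowed with a T-quasi-invariant measure in the Haar measure class. Choose a Borel section σ : X → T of the quotient map α : T → T/Γ, and let π : T → Γ be the map sending σ(x)γ to γ; the standard cocycle is κ : T × X → Γ, κ(t,x) = π(tσ(x)). Let G be a Polish group and let d : T → G and δ : Γ → G be continuous homomorphisms. If the cocycle (t,x) ↦ δ(κ(t,x)) is cohomologous to the cocycle (t,x) ↦ d(t), then there exists g ∈ G such that for all γ ∈ Γ, δ(γ) = g⁻¹ d(γ) g. -/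
/-!
Lift the transfer function to `T` as `F s = δ (π s)⁻¹ * φ (s Γ) * d s`. The cohomology
equation says exactly that `F (t * s) = F s` for every `t` and almost every `s`, so by
Fubini `F` is almost everywhere equal to a constant `c`. On the other hand
`F (s * γ) = δ γ⁻¹ * F s * d γ` for every `γ ∈ Γ`; since right translations preserve
Haar-null sets, comparing both at a common good point gives `δ γ = c * d γ * c⁻¹`.
-/

open MeasureTheory

section LeftInvariant

variable {T β : Type*} [Group T] [MeasurableSpace T] [MeasurableMul₂ T] [MeasurableInv T]
  {ν : Measure T} [SFinite ν] [ν.IsMulLeftInvariant] [NeZero ν]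

theorem exists_ae_eq_const_of_forall_ae_mul_left_eq [MeasurableSpace β] [MeasurableEq β]
    {F : T → β} (hF : Measurable F) (h : ∀ t, ∀ᵐ s ∂ν, F (t * s) = F s) :
    ∃ c, ∀ᵐ s ∂ν, F s = c := by
  have hmeas : MeasurableSet {p : T × T | F (p.1 * p.2) = F p.2} :=
    measurableSet_eq_fun (hF.comp measurable_mul) (hF.comp measurable_snd)
  have hswap : ∀ᵐ s ∂ν, ∀ᵐ t ∂ν, F (t * s) = F s :=
    (Measure.ae_ae_comm hmeas).1 (ae_of_all _ h)
  obtain ⟨s₀, hs₀⟩ := hswap.exists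
  refine ⟨F s₀, ?_⟩
  filter_upwards [(quasiMeasurePreserving_mul_right ν s₀⁻¹).ae hs₀] with s hs
  rwa [inv_mul_cancel_right] at hs

theorem eq_mul_mul_inv_of_ae_eq_const {G : Type*} [Group G] {F : T → G} {c : G}
    (hc : ∀ᵐ s ∂ν, F s = c) {γ : T} {a b : G} (hF : ∀ s, F (s * γ) = a⁻¹ * F s * b) :
    a = c * b * c⁻¹ := by
  obtain ⟨s, hs, hsγ⟩ := (hc.and ((quasiMeasurePreserving_mul_right ν γ).ae hc)).exists
  rw [hF, hs] at hsγ
  rw [eq_mul_inv_iff_mul_eq]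
  nth_rw 1 [← hsγ]
  group

end LeftInvariant

section StandardCocycle

variable {T G : Type*} [Group T] [Group G] {Γ : Subgroup T} {σ : T ⧸ Γ → T} {π : T → Γ}

theorem sectionCoord_mul_of_mem (hπ : ∀ t : T, (π t : T) = (σ (t : T ⧸ Γ))⁻¹ * t)
    (s : T) (γ : Γ) : π (s * γ) = π s * γ := by
  ext
  push_cast [hπ, QuotientGroup.mk_mul_of_mem s γ.2]
  group

theorem standardCocycle_mk (hσ : ∀ x : T ⧸ Γ, (σ x : T ⧸ Γ) = x)
    (hπ : ∀ t : T, (π t : T) = (σ (t : T ⧸ Γ))⁻¹ * t)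
    {κ : T → T ⧸ Γ → Γ} (hκ : ∀ t x, κ t x = π (t * σ x)) (t s : T) :
    κ t s = π (t * s) * (π s)⁻¹ := by
  have hmk : ((t * σ s : T) : T ⧸ Γ) = (t * s : T) := by
    rw [← smul_eq_mul, ← MulAction.Quotient.smul_coe, hσ, MulAction.Quotient.smul_coe,
      smul_eq_mul]
  ext
  push_cast [hκ, hπ, hmk]
  group

def transferLift (δ : Γ →* G) (d : T →* G) (π : T → Γ) (φ : T ⧸ Γ → G) (s : T) : G :=
  (δ (π s))⁻¹ * φ s * d s

theorem transferLift_mul_of_mem (δ : Γ →* G) (d : T →* G) (φ : T ⧸ Γ → G)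
    (hπ : ∀ t : T, (π t : T) = (σ (t : T ⧸ Γ))⁻¹ * t) (s : T) (γ : Γ) :
    transferLift δ d π φ (s * γ) = (δ γ)⁻¹ * transferLift δ d π φ s * d γ := by
  simp only [transferLift, sectionCoord_mul_of_mem hπ, QuotientGroup.mk_mul_of_mem s γ.2,
    map_mul]
  group

theorem transferLift_mul_left (hσ : ∀ x : T ⧸ Γ, (σ x : T ⧸ Γ) = x)
    (hπ : ∀ t : T, (π t : T) = (σ (t : T ⧸ Γ))⁻¹ * t)
    {κ : T → T ⧸ Γ → Γ} (hκ : ∀ t x, κ t x = π (t * σ x))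
    {δ : Γ →* G} {d : T →* G} {φ : T ⧸ Γ → G} {t s : T}
    (hcoh : δ (κ t s) * φ s = φ (t • (s : T ⧸ Γ)) * d t) :
    transferLift δ d π φ (t * s) = transferLift δ d π φ s := by
  rw [standardCocycle_mk hσ hπ hκ, MulAction.Quotient.smul_coe, smul_eq_mul, map_mul,
    map_inv] at hcoh
  simp only [transferLift, eq_mul_inv_of_mul_eq hcoh.symm, map_mul]
  group

section Measurable

variable [MeasurableSpace T]

theorem measurable_sectionCoord [MeasurableMul₂ T] [MeasurableInv T] (hσ : Measurable σ)
    (hπ : ∀ t : T, (π t : T) = (σ (t : T ⧸ Γ))⁻¹ * t) : Measurable π := by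
  rintro _ ⟨u, hu, rfl⟩
  have h : Measurable fun t : T => (σ (t : T ⧸ Γ))⁻¹ * t :=
    ((hσ.comp measurable_quot_mk).inv).mul measurable_id
  simpa only [Set.preimage_preimage, hπ] using h hu

theorem measurable_transferLift [MeasurableSpace G] [MeasurableMul₂ G] [MeasurableInv G]
    {δ : Γ →* G} {d : T →* G} {φ : T ⧸ Γ → G}
    (hδ : Measurable δ) (hd : Measurable d) (hφ : Measurable φ) (hπ : Measurable π) :
    Measurable (transferLift δ d π φ) :=
  (((hδ.comp hπ).inv).mul (hφ.comp measurable_quot_mk)).mul hd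

end Measurable

end StandardCocycle

theorem conj_of_standard_cocycle_cohomologous_to_hom_general
    {T : Type*} [Group T] [TopologicalSpace T] [IsTopologicalGroup T]
    [LocallyCompactSpace T] [SecondCountableTopology T]
    [MeasurableSpace T] [BorelSpace T]
    (Γ : Subgroup T)
    -- a left Haar measure on `T` and a quasi-invariant measure `μ` on `X = T ⧸ Γ`
    -- in the class of the pushforward of Haar measure
    (ν : Measure T) [ν.IsHaarMeasure]
    (μ : Measure (T ⧸ Γ))
    (hμ₂ : ν.map (QuotientGroup.mk : T → T ⧸ Γ) ≪ μ)
    -- a Borel section `σ` of the quotient map, the map `π : T → Γ`, `σ(x)γ ↦ γ`,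
    -- and the associated standard cocycle `κ(t,x) = π(t σ(x))`
    (σ : T ⧸ Γ → T) (hσ_meas : Measurable σ)
    (hσ_sec : ∀ x : T ⧸ Γ, (QuotientGroup.mk (σ x) : T ⧸ Γ) = x)
    (π : T → Γ) (hπ : ∀ t : T, (π t : T) = (σ (QuotientGroup.mk t))⁻¹ * t)
    (κ : T → T ⧸ Γ → Γ) (hκ : ∀ (t : T) (x : T ⧸ Γ), κ t x = π (t * σ x))
    -- a Polish group `G` and continuous homomorphisms `d : T → G`, `δ : Γ → G`
    {G : Type*} [Group G] [TopologicalSpace G] [IsTopologicalGroup G] [PolishSpace G]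
    [MeasurableSpace G] [BorelSpace G]
    (d : T →* G) (hd : Continuous d)
    (δ : Γ →* G) (hδ : Continuous δ)
    -- the cocycle `(t,x) ↦ δ(κ(t,x))` is cohomologous to the cocycle `(t,x) ↦ d(t)`
    (φ : T ⧸ Γ → G) (hφ : Measurable φ)
    (hcoh : ∀ t : T, ∀ᵐ x ∂μ, δ (κ t x) * φ x = φ (t • x) * d t) :
    ∃ g : G, ∀ γ : Γ, δ γ = g⁻¹ * d γ * g := by
  have hF : Measurable (transferLift δ d π φ) := measurable_transferLift hδ.measurable
    hd.measurable hφ (measurable_sectionCoord hσ_meas hπ)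
  have hinv (t : T) : ∀ᵐ s ∂ν, transferLift δ d π φ (t * s) = transferLift δ d π φ s :=
    (ae_of_ae_map measurable_quot_mk.aemeasurable (hμ₂.ae_le (hcoh t))).mono
      fun _ hs ↦ transferLift_mul_left hσ_sec hπ hκ hs
  obtain ⟨c, hc⟩ := exists_ae_eq_const_of_forall_ae_mul_left_eq hF hinv
  refine ⟨c⁻¹, fun γ ↦ ?_⟩
  rw [inv_inv]
  exact eq_mul_mul_inv_of_ae_eq_const hc (transferLift_mul_of_mem δ d φ hπ · γ)

/-- If the cocycle `δ ∘ κ` (with `κ` the standard cocycle of a closed subgroup `Γ` of an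
lcsc group `T`, associated to a Borel section `σ` of `T → T ⧸ Γ`) is cohomologous to a
continuous homomorphism `d : T → G` into a Polish group `G`, then `δ` is a conjugate of
the restriction of `d` to `Γ`. -/
theorem conj_of_standard_cocycle_cohomologous_to_hom
    {T : Type*} [Group T] [TopologicalSpace T] [IsTopologicalGroup T]
    [LocallyCompactSpace T] [SecondCountableTopology T]
    [MeasurableSpace T] [BorelSpace T]
    (Γ : Subgroup T) (hΓ : IsClosed (Γ : Set T))
    -- a left Haar measure on `T` and a quasi-invariant measure `μ` on `X = T ⧸ Γ`
    -- in the class of the pushforward of Haar measure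
    (ν : Measure T) [ν.IsHaarMeasure]
    (μ : Measure (T ⧸ Γ))
    (hμ₁ : μ ≪ ν.map (QuotientGroup.mk : T → T ⧸ Γ))
    (hμ₂ : ν.map (QuotientGroup.mk : T → T ⧸ Γ) ≪ μ)
    (hqinv : ∀ t : T, Measure.QuasiMeasurePreserving (fun x : T ⧸ Γ => t • x) μ μ)
    -- a Borel section `σ` of the quotient map, the map `π : T → Γ`, `σ(x)γ ↦ γ`,
    -- and the associated standard cocycle `κ(t,x) = π(t σ(x))`
    (σ : T ⧸ Γ → T) (hσ_meas : Measurable σ)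
    (hσ_sec : ∀ x : T ⧸ Γ, (QuotientGroup.mk (σ x) : T ⧸ Γ) = x)
    (π : T → Γ) (hπ : ∀ t : T, (π t : T) = (σ (QuotientGroup.mk t))⁻¹ * t)
    (κ : T → T ⧸ Γ → Γ) (hκ : ∀ (t : T) (x : T ⧸ Γ), κ t x = π (t * σ x))
    -- a Polish group `G` and continuous homomorphisms `d : T → G`, `δ : Γ → G`
    {G : Type*} [Group G] [TopologicalSpace G] [IsTopologicalGroup G] [PolishSpace G]
    [MeasurableSpace G] [BorelSpace G]
    (d : T →* G) (hd : Continuous d)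
    (δ : Γ →* G) (hδ : Continuous δ)
    -- the cocycle `(t,x) ↦ δ(κ(t,x))` is cohomologous to the cocycle `(t,x) ↦ d(t)`
    (φ : T ⧸ Γ → G) (hφ : Measurable φ)
    (hcoh : ∀ t : T, ∀ᵐ x ∂μ, δ (κ t x) * φ x = φ (t • x) * d t) :
    ∃ g : G, ∀ γ : Γ, δ γ = g⁻¹ * d γ * g :=
  conj_of_standard_cocycle_cohomologous_to_hom_general Γ ν μ hμ₂ σ hσ_meas hσ_sec π hπ κ hκ d hd δ
    hδ φ hφ hcoh
end

section
/- Let T be a locally compact second countable group, X a T-Lebesgue space, G a Polish group, c : T × X → G a measurable cocycle, and H a closed subgroup of G. Endow G/H with the quotient topology and its Borel structure, and let G act on G/H by left translations. Then there exists a c-equivariant measurable map φ : X → G/H if and only if c is cohomologous to a cocycle taking values in H. -/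
/-!
Pick a Borel section `s` of `G → G ⧸ H`; it exists by the Kuratowski–Ryll-Nardzewski selection
argument applied to the cosets, which are closed and whose saturations of open sets are open. Given
an equivariant `φ`, the map `ψ = s ∘ φ` lifts it, and `ψ (t • x)⁻¹ * c t x * ψ x` is then a
cocycle cohomologous to `c` with values in `H` almost everywhere; redefining it to be `1` on the
exceptional set keeps it a cocycle because the action is quasi-invariant. Conversely, if `c` is
cohomologous to an `H`-valued cocycle through `ψ`, then `x ↦ ψ x H` is equivariant.
-/

open MeasureTheory Filter Topology Metric

section MeasurableSelection

variable {X Y : Type*} [MeasurableSpace Y]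

theorem exists_measurable_nat_of_forall_exists {P : Y → ℕ → Prop}
    (hP : ∀ n, MeasurableSet {y | P y n}) (hex : ∀ y, ∃ n, P y n) :
    ∃ i : Y → ℕ, Measurable i ∧ ∀ y, P y (i y) := by
  classical
  exact ⟨fun y => Nat.find (hex y), measurable_find hex hP, fun y => Nat.find_spec (hex y)⟩

/-- Kuratowski–Ryll-Nardzewski: a weakly measurable closed-valued map admits a measurable
selection. -/
theorem exists_measurable_selection [TopologicalSpace X] [PolishSpace X] [MeasurableSpace X]
    [BorelSpace X] {F : Y → Set X} (hF : ∀ y, IsClosed (F y)) (hne : ∀ y, (F y).Nonempty)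
    (hmeas : ∀ U, IsOpen U → MeasurableSet {y | (F y ∩ U).Nonempty}) :
    ∃ s : Y → X, Measurable s ∧ ∀ y, s y ∈ F y := by
  rcases isEmpty_or_nonempty Y with hY | ⟨⟨y₀⟩⟩
  · exact ⟨isEmptyElim, measurable_of_empty _, isEmptyElim⟩
  have : Nonempty X := ⟨(hne y₀).some⟩
  let := TopologicalSpace.upgradeIsCompletelyMetrizable X
  obtain ⟨u, hu⟩ := TopologicalSpace.exists_dense_seq X
  let S : ℕ → Type _ := fun k =>
    {i : Y → ℕ // Measurable i ∧ ∀ y, (F y ∩ ball (u (i y)) ((1 / 2) ^ k)).Nonempty}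
  have base : Nonempty (S 0) := by
    have hex : ∀ y, ∃ n, (F y ∩ ball (u n) ((1 / 2) ^ 0)).Nonempty := fun y => by
      obtain ⟨x, hx⟩ := hne y
      obtain ⟨n, hn⟩ := hu.exists_dist_lt x one_pos
      exact ⟨n, x, hx, by simpa [mem_ball, dist_comm] using hn⟩
    obtain ⟨i, hi⟩ := exists_measurable_nat_of_forall_exists (fun n => hmeas _ isOpen_ball) hex
    exact ⟨⟨i, hi⟩⟩
  have step : ∀ k (i : S k), ∃ j : S (k + 1),
      ∀ y, dist (u (i.1 y)) (u (j.1 y)) ≤ 4 / 2 / 2 ^ k := by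
    intro k ⟨i, hi_meas, hi⟩
    have hr : (0 : ℝ) < (1 / 2) ^ (k + 1) := by positivity
    have hex : ∀ y, ∃ n, (F y ∩ ball (u n) ((1 / 2) ^ (k + 1))).Nonempty ∧
        dist (u (i y)) (u n) < 4 / 2 / 2 ^ k := fun y => by
      obtain ⟨x, hxF, hxi⟩ := hi y
      obtain ⟨n, hn⟩ := hu.exists_dist_lt x hr
      refine ⟨n, ⟨x, hxF, mem_ball.2 hn⟩, ?_⟩
      calc dist (u (i y)) (u n) ≤ dist (u (i y)) x + dist x (u n) := dist_triangle _ _ _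
        _ < (1 / 2) ^ k + (1 / 2) ^ (k + 1) := add_lt_add (by rwa [dist_comm, ← mem_ball]) hn
        _ ≤ 4 / 2 / 2 ^ k := by rw [pow_succ, one_div_pow]; field_simp; norm_num
    obtain ⟨j, hj_meas, hj⟩ := exists_measurable_nat_of_forall_exists
      (fun n => (hmeas _ isOpen_ball).inter (hi_meas (MeasurableSet.of_discrete
        (s := {m | dist (u m) (u n) < 4 / 2 / 2 ^ k})))) hex
    exact ⟨⟨j, hj_meas, fun y => (hj y).1⟩, fun y => (hj y).2.le⟩
  choose next hnext using step
  let seq : ∀ k, S k := fun k => Nat.rec (motive := S) base.some next k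
  let p : ℕ → Y → X := fun k y => u ((seq k).1 y)
  have hp_cauchy : ∀ y, CauchySeq fun k => p k y :=
    fun y => cauchySeq_of_le_geometric_two fun k => hnext k (seq k) y
  choose s hs using fun y => cauchySeq_tendsto_of_complete (hp_cauchy y)
  refine ⟨s, measurable_of_tendsto_metrizable (f := p)
    (fun k => Measurable.of_discrete.comp (seq k).2.1) (tendsto_pi_nhds.2 hs), fun y => ?_⟩
  choose x hxF hx using fun k => (seq k).2.2 y
  have hdist : Tendsto (fun k => dist (p k y) (x k)) atTop (𝓝 0) :=
    squeeze_zero (fun _ => dist_nonneg) (fun k => (dist_comm _ _).trans_le (mem_ball.1 (hx k)).le)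
      (tendsto_pow_atTop_nhds_zero_of_lt_one (by norm_num) (by norm_num))
  exact (hF y).mem_of_tendsto (tendsto_of_tendsto_of_dist (hs y) hdist) (Eventually.of_forall hxF)

theorem IsOpenMap.exists_measurable_rightInverse [TopologicalSpace X] [PolishSpace X]
    [MeasurableSpace X] [BorelSpace X] [TopologicalSpace Y] [T1Space Y] [OpensMeasurableSpace Y]
    {f : X → Y} (hfo : IsOpenMap f) (hfc : Continuous f) (hf : Function.Surjective f) :
    ∃ s : Y → X, Measurable s ∧ Function.RightInverse s f := by
  have hsat : ∀ U, {y | (f ⁻¹' {y} ∩ U).Nonempty} = f '' U := fun U =>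
    Set.ext fun _ => ⟨fun ⟨x, hxy, hxU⟩ => ⟨x, hxU, hxy⟩, fun ⟨x, hxU, hxy⟩ => ⟨x, hxy, hxU⟩⟩
  exact exists_measurable_selection (F := fun y => f ⁻¹' {y})
    (fun _ => isClosed_singleton.preimage hfc) hf
    fun U hU => hsat U ▸ (hfo U hU).measurableSet

end MeasurableSelection

section Cocycle

variable {T X G : Type*} [Group T] [MulAction T X] [MeasurableSpace X] [Group G] {μ : Measure X}

def IsCocycle (μ : Measure X) (c : T → X → G) : Prop :=
  ∀ t t' : T, ∀ᵐ x ∂μ, c (t * t') x = c t (t' • x) * c t' x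

theorem IsCocycle.twist {c : T → X → G} (hc : IsCocycle μ c) (ψ : X → G) :
    IsCocycle μ fun t x => (ψ (t • x))⁻¹ * (c t x * ψ x) := by
  intro t t'
  filter_upwards [hc t t'] with x hx
  rw [hx, mul_smul]
  group

theorem IsCocycle.congr_ae
    (hqinv : ∀ t : T, Measure.QuasiMeasurePreserving (fun x : X => t • x) μ μ)
    {c c' : T → X → G} (hc : IsCocycle μ c) (h : ∀ t, c' t =ᵐ[μ] c t) : IsCocycle μ c' := by
  intro t t'
  filter_upwards [hc t t', h (t * t'), h t', (hqinv t').ae (h t)] with x hx h₁ h₂ h₃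
  rw [h₁, h₂, h₃, hx]

theorem IsCocycle.exists_forall_mem_of_ae_mem [MeasurableSpace T] [MeasurableSpace G]
    (hqinv : ∀ t : T, Measure.QuasiMeasurePreserving (fun x : X => t • x) μ μ)
    {c : T → X → G} (hc : IsCocycle μ c) (hc_meas : Measurable fun p : T × X => c p.1 p.2)
    {H : Subgroup G} (hH : MeasurableSet (H : Set G)) (hmem : ∀ t, ∀ᵐ x ∂μ, c t x ∈ H) :
    ∃ c' : T → X → G, (Measurable fun p : T × X => c' p.1 p.2) ∧ IsCocycle μ c' ∧
      (∀ t x, c' t x ∈ H) ∧ ∀ t, c' t =ᵐ[μ] c t := by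
  classical
  have hc' : ∀ t, (fun x => if c t x ∈ H then c t x else 1) =ᵐ[μ] c t := fun t => by
    filter_upwards [hmem t] with x hx
    exact if_pos hx
  refine ⟨fun t x => if c t x ∈ H then c t x else 1,
    Measurable.ite (hc_meas hH) hc_meas measurable_const, hc.congr_ae hqinv hc',
    fun t x => ?_, hc'⟩
  dsimp only
  split_ifs with h
  exacts [h, H.one_mem]

end Cocycle

theorem equivariant_map_iff_cohomologous_to_subgroup_valued_general
    {T X G : Type*}
    [Group T]
    [MeasurableSpace T]
    [MeasurableSpace X] (μ : Measure X)
    [MulAction T X] (hact : Measurable fun p : T × X => p.1 • p.2)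
    (hqinv : ∀ t : T, Measure.QuasiMeasurePreserving (fun x : X => t • x) μ μ)
    [Group G] [TopologicalSpace G] [IsTopologicalGroup G] [PolishSpace G]
    [MeasurableSpace G] [BorelSpace G]
    (c : T → X → G) (hc_meas : Measurable fun p : T × X => c p.1 p.2)
    (hc : ∀ t t' : T, ∀ᵐ x ∂μ, c (t * t') x = c t (t' • x) * c t' x)
    (H : Subgroup G) (hH : IsClosed (H : Set G)) :
    (∃ φ : X → G ⧸ H, Measurable φ ∧ ∀ t : T, ∀ᵐ x ∂μ, φ (t • x) = c t x • φ x) ↔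
    (∃ c' : T → X → G,
      (Measurable fun p : T × X => c' p.1 p.2) ∧
      (∀ t t' : T, ∀ᵐ x ∂μ, c' (t * t') x = c' t (t' • x) * c' t' x) ∧
      (∀ (t : T) (x : X), c' t x ∈ H) ∧
      ∃ ψ : X → G, Measurable ψ ∧
        ∀ t : T, ∀ᵐ x ∂μ, c t x * ψ x = ψ (t • x) * c' t x) := by
  constructor
  · rintro ⟨φ, hφ_meas, hφ⟩
    have : IsClosed (H : Set G) := hH
    obtain ⟨s, hs_meas, hs⟩ := (QuotientGroup.isOpenMap_coe (N := H)).exists_measurable_rightInverse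
      QuotientGroup.continuous_mk QuotientGroup.mk_surjective
    let ψ : X → G := s ∘ φ
    have hψ_meas : Measurable ψ := hs_meas.comp hφ_meas
    have htwist_meas : Measurable fun p : T × X => (ψ (p.1 • p.2))⁻¹ * (c p.1 p.2 * ψ p.2) :=
      (hψ_meas.comp hact).inv.mul (hc_meas.mul (hψ_meas.comp measurable_snd))
    have htwist_mem : ∀ t, ∀ᵐ x ∂μ, (ψ (t • x))⁻¹ * (c t x * ψ x) ∈ H := fun t => by
      filter_upwards [hφ t] with x hx
      rw [← QuotientGroup.eq, ← smul_eq_mul, ← MulAction.Quotient.smul_mk]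
      simpa only [ψ, Function.comp_apply, hs _] using hx
    obtain ⟨c', hc'_meas, hc'_coc, hc'_mem, hc'⟩ := IsCocycle.exists_forall_mem_of_ae_mem hqinv
      (IsCocycle.twist hc ψ) htwist_meas hH.measurableSet htwist_mem
    refine ⟨c', hc'_meas, hc'_coc, hc'_mem, ψ, hψ_meas, fun t => ?_⟩
    filter_upwards [hc' t] with x hx
    rw [hx]
    exact (mul_inv_cancel_left _ _).symm
  · rintro ⟨c', -, -, hc'_mem, ψ, hψ_meas, hψ⟩
    refine ⟨fun x => (ψ x : G ⧸ H), QuotientGroup.measurable_coe.comp hψ_meas, fun t => ?_⟩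
    filter_upwards [hψ t] with x hx
    change _ = ((c t x * ψ x : G) : G ⧸ H)
    rw [hx, QuotientGroup.mk_mul_of_mem _ (hc'_mem t x)]

/-- For a measurable cocycle `c : T × X → G` over a `T`-Lebesgue space `X` and a closed
subgroup `H ≤ G` of a Polish group `G`, there exists a `c`-equivariant measurable map
`X → G ⧸ H` iff `c` is cohomologous to a cocycle taking values in `H`. -/
theorem equivariant_map_iff_cohomologous_to_subgroup_valued
    {T X G : Type*}
    [Group T] [TopologicalSpace T] [IsTopologicalGroup T]
    [LocallyCompactSpace T] [SecondCountableTopology T]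
    [MeasurableSpace T] [BorelSpace T]
    [MeasurableSpace X] [StandardBorelSpace X] (μ : Measure X) [SigmaFinite μ]
    [MulAction T X] (hact : Measurable fun p : T × X => p.1 • p.2)
    (hqinv : ∀ t : T, Measure.QuasiMeasurePreserving (fun x : X => t • x) μ μ)
    [Group G] [TopologicalSpace G] [IsTopologicalGroup G] [PolishSpace G]
    [MeasurableSpace G] [BorelSpace G]
    (c : T → X → G) (hc_meas : Measurable fun p : T × X => c p.1 p.2)
    (hc : ∀ t t' : T, ∀ᵐ x ∂μ, c (t * t') x = c t (t' • x) * c t' x)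
    (H : Subgroup G) (hH : IsClosed (H : Set G)) :
    (∃ φ : X → G ⧸ H, Measurable φ ∧ ∀ t : T, ∀ᵐ x ∂μ, φ (t • x) = c t x • φ x) ↔
    (∃ c' : T → X → G,
      (Measurable fun p : T × X => c' p.1 p.2) ∧
      (∀ t t' : T, ∀ᵐ x ∂μ, c' (t * t') x = c' t (t' • x) * c' t' x) ∧
      (∀ (t : T) (x : X), c' t x ∈ H) ∧
      ∃ ψ : X → G, Measurable ψ ∧
        ∀ t : T, ∀ᵐ x ∂μ, c t x * ψ x = ψ (t • x) * c' t x) :=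
  equivariant_map_iff_cohomologous_to_subgroup_valued_general μ hact hqinv c hc_meas hc H hH
end

section
/- Let T be a locally compact second countable group, Γ a closed subgroup of T, and X = T/Γ endowed with a T-quasi-invariant measure in the Haar measure class. Choose a Borel section σ : X → T of the quotient map, let π : T → Γ be the map sending σ(x)γ to γ, and let κ(t,x) = π(tσ(x)) be the standard cocycle. Let G be a Polish group, δ : Γ → G a continuous homomorphism, and H a closed subgroup of G. If the cocycle (t,x) ↦ δ(κ(t,x)) is cohomologous to a cocycle taking values in H, then there exists g ∈ G such that g⁻¹ δ(Γ) g ⊆ H. -/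
/-!
Pull everything back to `T`: `F s = δ (π s)⁻¹ * ψ (sΓ)` satisfies `F (s γ) = δ γ⁻¹ * F s`, and the
cohomology equation reads `F (t s)⁻¹ * F s = c' t (sΓ) ∈ H` for a.e. `s`. So `F` modulo `H` is a.e.
invariant under each left translation, hence (Fubini) a.e. equal to a single coset `g H`. Comparing
`F s` with `F (s γ⁻¹) = δ γ * F s` at a generic `s` gives `δ γ • g H = g H`, i.e. `g⁻¹ δ γ g ∈ H`.
-/

open MeasureTheory

section AeConstant

variable {T G : Type*} [Group T] [MeasurableSpace T] [MeasurableMul₂ T] [MeasurableInv T]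
  {ν : Measure T} [SFinite ν] [ν.IsMulLeftInvariant] [NeZero ν] [Group G] {H : Subgroup G}

theorem exists_ae_mk_eq_of_forall_ae_mk_mul_eq [MeasurableSpace G] [MeasurableMul₂ G]
    [MeasurableInv G] (hH : MeasurableSet (H : Set G)) {F : T → G} (hF : Measurable F)
    (hF_inv : ∀ t, ∀ᵐ s ∂ν, (F (t * s) : G ⧸ H) = F s) :
    ∃ g : G, ∀ᵐ s ∂ν, (F s : G ⧸ H) = g := by
  have hmeas : MeasurableSet {p : T × T | (F (p.1 * p.2) : G ⧸ H) = F p.2} := by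
    simp_rw [QuotientGroup.eq]
    exact ((hF.comp measurable_mul).inv.mul (hF.comp measurable_snd)) hH
  obtain ⟨s₀, hs₀⟩ := ((Measure.ae_ae_comm (μ := ν) (ν := ν) hmeas).mp (.of_forall hF_inv)).exists
  refine ⟨F s₀, ?_⟩
  filter_upwards [(quasiMeasurePreserving_mul_right ν s₀⁻¹).ae hs₀] with u hu
  simpa using hu

theorem conj_mem_of_ae_mk_eq {F : T → G} {a : T} {b g : G} (hF : ∀ s, F (s * a) = b⁻¹ * F s)
    (hg : ∀ᵐ s ∂ν, (F s : G ⧸ H) = g) : g⁻¹ * b * g ∈ H := by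
  obtain ⟨u, hu, hua⟩ := (hg.and ((quasiMeasurePreserving_mul_right ν a).ae hg)).exists
  rw [hF, QuotientGroup.eq] at hua
  rw [QuotientGroup.eq] at hu
  convert H.mul_mem (H.inv_mem hu) hua using 1
  group

end AeConstant

section StandardCocycle

variable {T : Type*} [Group T] {Γ : Subgroup T} {σ : T ⧸ Γ → T} {π : T → Γ}

theorem section_mk_eq (hπ : ∀ t : T, (π t : T) = (σ t)⁻¹ * t) (s : T) :
    σ s = s * (π s : T)⁻¹ := by
  rw [hπ]; group

theorem proj_mul_coe (hπ : ∀ t : T, (π t : T) = (σ t)⁻¹ * t) (s : T) (γ : Γ) :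
    π (s * γ) = π s * γ := by
  have hmk : ((s * γ : T) : T ⧸ Γ) = s := QuotientGroup.mk_mul_of_mem s γ.2
  ext
  simp only [hπ, hmk, Subgroup.coe_mul, mul_assoc]

theorem standardCocycle_mk_eq (hπ : ∀ t : T, (π t : T) = (σ t)⁻¹ * t) {κ : T → T ⧸ Γ → Γ}
    (hκ : ∀ (t : T) (x : T ⧸ Γ), κ t x = π (t * σ x)) (t s : T) :
    κ t s = π (t * s) * (π s)⁻¹ := by
  rw [hκ, section_mk_eq hπ, ← mul_assoc, ← InvMemClass.coe_inv, proj_mul_coe hπ]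

theorem measurable_proj [MeasurableSpace T] [MeasurableMul₂ T] [MeasurableInv T]
    (hπ : ∀ t : T, (π t : T) = (σ t)⁻¹ * t) (hσ : Measurable σ) : Measurable π := by
  have hπ_eq : π = fun s => ⟨(σ s)⁻¹ * s, hπ s ▸ (π s).2⟩ := funext fun s => Subtype.ext (hπ s)
  rw [hπ_eq]
  exact ((hσ.comp QuotientGroup.measurable_coe).inv.mul measurable_id).subtype_mk

variable {G : Type*} [Group G]

def cohomologyLift (δ : Γ →* G) (π : T → Γ) (ψ : T ⧸ Γ → G) (s : T) : G :=
  (δ (π s))⁻¹ * ψ s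

theorem cohomologyLift_mul_coe (hπ : ∀ t : T, (π t : T) = (σ t)⁻¹ * t) (δ : Γ →* G)
    (ψ : T ⧸ Γ → G) (s : T) (γ : Γ) :
    cohomologyLift δ π ψ (s * γ) = (δ γ)⁻¹ * cohomologyLift δ π ψ s := by
  simp only [cohomologyLift, proj_mul_coe hπ, map_mul, mul_inv_rev, mul_assoc,
    QuotientGroup.mk_mul_of_mem s γ.2]

theorem ae_cohomologyLift_mul_eq [MeasurableSpace T] (hπ : ∀ t : T, (π t : T) = (σ t)⁻¹ * t)
    {κ : T → T ⧸ Γ → Γ} (hκ : ∀ (t : T) (x : T ⧸ Γ), κ t x = π (t * σ x))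
    {ν : Measure T} {μ : Measure (T ⧸ Γ)} (hνμ : ν.map (↑) ≪ μ)
    {δ : Γ →* G} {ψ : T ⧸ Γ → G} {H : Subgroup G} {c : T → T ⧸ Γ → G} (hcH : ∀ t x, c t x ∈ H)
    (t : T) (hcoh : ∀ᵐ x ∂μ, δ (κ t x) * ψ x = ψ (t • x) * c t x) :
    ∀ᵐ s ∂ν, ((cohomologyLift δ π ψ (t * s) : G) : G ⧸ H) = cohomologyLift δ π ψ s := by
  have hmk : Measure.QuasiMeasurePreserving ((↑) : T → T ⧸ Γ) ν μ :=
    ⟨QuotientGroup.measurable_coe, hνμ⟩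
  filter_upwards [hmk.ae hcoh] with s hs
  rw [standardCocycle_mk_eq hπ hκ, map_mul, map_inv] at hs
  have hc : (cohomologyLift δ π ψ (t * s))⁻¹ * cohomologyLift δ π ψ s = c t s :=
    calc (cohomologyLift δ π ψ (t * s))⁻¹ * cohomologyLift δ π ψ s
        = (ψ (t * s : T))⁻¹ * (δ (π (t * s)) * (δ (π s))⁻¹ * ψ s) := by
          simp only [cohomologyLift]; group
      _ = c t s := by rw [hs]; exact inv_mul_cancel_left _ _
  rw [QuotientGroup.eq, hc]
  exact hcH t s

end StandardCocycle

theorem conj_in_subgroup_of_standard_cocycle_cohomologous_general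
    {T : Type*} [Group T] [TopologicalSpace T] [IsTopologicalGroup T]
    [LocallyCompactSpace T] [SecondCountableTopology T]
    [MeasurableSpace T] [BorelSpace T]
    (Γ : Subgroup T)
    -- a left Haar measure on `T` and a quasi-invariant measure `μ` on `X = T ⧸ Γ`
    -- in the class of the pushforward of Haar measure
    (ν : Measure T) [ν.IsHaarMeasure]
    (μ : Measure (T ⧸ Γ))
    (hμ₂ : ν.map (QuotientGroup.mk : T → T ⧸ Γ) ≪ μ)
    -- a Borel section `σ` of the quotient map, the map `π : T → Γ`, `σ(x)γ ↦ γ`,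
    -- and the associated standard cocycle `κ(t,x) = π(t σ(x))`
    (σ : T ⧸ Γ → T) (hσ_meas : Measurable σ)
    (π : T → Γ) (hπ : ∀ t : T, (π t : T) = (σ (QuotientGroup.mk t))⁻¹ * t)
    (κ : T → T ⧸ Γ → Γ) (hκ : ∀ (t : T) (x : T ⧸ Γ), κ t x = π (t * σ x))
    -- a Polish group `G`, a continuous homomorphism `δ : Γ → G`, a closed subgroup `H ≤ G`
    {G : Type*} [Group G] [TopologicalSpace G] [IsTopologicalGroup G] [PolishSpace G]
    [MeasurableSpace G] [BorelSpace G]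
    (δ : Γ →* G) (hδ : Continuous δ)
    (H : Subgroup G) (hH : IsClosed (H : Set G))
    -- `δ ∘ κ` is cohomologous to a cocycle `c'` taking values in `H`
    (c' : T → T ⧸ Γ → G)
    (hc'H : ∀ (t : T) (x : T ⧸ Γ), c' t x ∈ H)
    (ψ : T ⧸ Γ → G) (hψ : Measurable ψ)
    (hcoh : ∀ t : T, ∀ᵐ x ∂μ, δ (κ t x) * ψ x = ψ (t • x) * c' t x) :
    ∃ g : G, ∀ γ : Γ, g⁻¹ * δ γ * g ∈ H := by
  have hF_meas : Measurable (cohomologyLift δ π ψ) :=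
    (hδ.measurable.comp (measurable_proj hπ hσ_meas)).inv.mul
      (hψ.comp QuotientGroup.measurable_coe)
  obtain ⟨g, hg⟩ := exists_ae_mk_eq_of_forall_ae_mk_mul_eq hH.measurableSet hF_meas
    fun t => ae_cohomologyLift_mul_eq hπ hκ hμ₂ hc'H t (hcoh t)
  exact ⟨g, fun γ => conj_mem_of_ae_mk_eq (fun s => cohomologyLift_mul_coe hπ δ ψ s γ) hg⟩

/-- If the cocycle `δ ∘ κ` (with `κ` the standard cocycle of a closed subgroup `Γ` of an
lcsc group `T`) is cohomologous to a cocycle taking values in a closed subgroup `H` of a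
Polish group `G`, then some conjugate of `δ(Γ)` is contained in `H`. -/
theorem conj_in_subgroup_of_standard_cocycle_cohomologous
    {T : Type*} [Group T] [TopologicalSpace T] [IsTopologicalGroup T]
    [LocallyCompactSpace T] [SecondCountableTopology T]
    [MeasurableSpace T] [BorelSpace T]
    (Γ : Subgroup T) (hΓ : IsClosed (Γ : Set T))
    -- a left Haar measure on `T` and a quasi-invariant measure `μ` on `X = T ⧸ Γ`
    -- in the class of the pushforward of Haar measure
    (ν : Measure T) [ν.IsHaarMeasure]
    (μ : Measure (T ⧸ Γ))
    (hμ₁ : μ ≪ ν.map (QuotientGroup.mk : T → T ⧸ Γ))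
    (hμ₂ : ν.map (QuotientGroup.mk : T → T ⧸ Γ) ≪ μ)
    (hqinv : ∀ t : T, Measure.QuasiMeasurePreserving (fun x : T ⧸ Γ => t • x) μ μ)
    -- a Borel section `σ` of the quotient map, the map `π : T → Γ`, `σ(x)γ ↦ γ`,
    -- and the associated standard cocycle `κ(t,x) = π(t σ(x))`
    (σ : T ⧸ Γ → T) (hσ_meas : Measurable σ)
    (hσ_sec : ∀ x : T ⧸ Γ, (QuotientGroup.mk (σ x) : T ⧸ Γ) = x)
    (π : T → Γ) (hπ : ∀ t : T, (π t : T) = (σ (QuotientGroup.mk t))⁻¹ * t)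
    (κ : T → T ⧸ Γ → Γ) (hκ : ∀ (t : T) (x : T ⧸ Γ), κ t x = π (t * σ x))
    -- a Polish group `G`, a continuous homomorphism `δ : Γ → G`, a closed subgroup `H ≤ G`
    {G : Type*} [Group G] [TopologicalSpace G] [IsTopologicalGroup G] [PolishSpace G]
    [MeasurableSpace G] [BorelSpace G]
    (δ : Γ →* G) (hδ : Continuous δ)
    (H : Subgroup G) (hH : IsClosed (H : Set G))
    -- `δ ∘ κ` is cohomologous to a cocycle `c'` taking values in `H`
    (c' : T → T ⧸ Γ → G)
    (hc'_meas : Measurable fun p : T × (T ⧸ Γ) => c' p.1 p.2)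
    (hc' : ∀ t t' : T, ∀ᵐ x ∂μ, c' (t * t') x = c' t (t' • x) * c' t' x)
    (hc'H : ∀ (t : T) (x : T ⧸ Γ), c' t x ∈ H)
    (ψ : T ⧸ Γ → G) (hψ : Measurable ψ)
    (hcoh : ∀ t : T, ∀ᵐ x ∂μ, δ (κ t x) * ψ x = ψ (t • x) * c' t x) :
    ∃ g : G, ∀ γ : Γ, g⁻¹ * δ γ * g ∈ H :=
  conj_in_subgroup_of_standard_cocycle_cohomologous_general Γ ν μ hμ₂ σ hσ_meas π hπ κ hκ δ hδ H hH
    c' hc'H ψ hψ hcoh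
end

section
/- Let k be a local field, i.e., a field with a nontrivial absolute value which is complete and locally compact. Let D ⊆ kⁿ be a compact subset whose k-linear span is all of kⁿ. Then the setwise stabilizer {g ∈ GLₙ(k) : g·D = D} is a compact subgroup of GLₙ(k). -/
/-!
Every `g` in the stabilizer maps `D` into itself, and so does `g⁻¹`; hence the stabilizer is the
group of units of the monoid of matrices mapping `D` into `D`. That monoid is compact: it is closed
because `D` is, and bounded because each basis vector `eⱼ` is a fixed linear combination of points
of `D`, so the column `A eⱼ` of such a matrix is the same combination of points of the bounded set
`D`. The units of a compact monoid form a compact group, via `u ↦ (u, u⁻¹)`.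
-/

open Set

theorem Submodule.exists_norm_apply_le_of_mem_span {𝕜 E F : Type*} [NormedField 𝕜]
    [AddCommGroup E] [Module 𝕜 E] [SeminormedAddCommGroup F] [NormedSpace 𝕜 F]
    {D : Set E} {B : Set F} (hB : Bornology.IsBounded B) {v : E} (hv : v ∈ span 𝕜 D) :
    ∃ C, ∀ f : E →ₗ[𝕜] F, MapsTo f D B → ‖f v‖ ≤ C := by
  induction hv using Submodule.span_induction with
  | mem x hx =>
    obtain ⟨C, hC⟩ := hB.exists_norm_le
    exact ⟨C, fun f hf => hC _ (hf hx)⟩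
  | zero => exact ⟨0, fun f _ => by simp⟩
  | add x y _ _ hx hy =>
    obtain ⟨Cx, hCx⟩ := hx
    obtain ⟨Cy, hCy⟩ := hy
    exact ⟨Cx + Cy, fun f hf => by
      rw [map_add]; exact (norm_add_le _ _).trans (add_le_add (hCx f hf) (hCy f hf))⟩
  | smul a x _ hx =>
    obtain ⟨C, hC⟩ := hx
    exact ⟨‖a‖ * C, fun f hf => by
      rw [map_smul, norm_smul]; exact mul_le_mul_of_nonneg_left (hC f hf) (norm_nonneg a)⟩

namespace Matrix

variable {ι R : Type*} [Fintype ι] [DecidableEq ι]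

def mapsToSubmonoid [Semiring R] (D : Set (ι → R)) : Submonoid (Matrix ι ι R) where
  carrier := {A | MapsTo (A *ᵥ ·) D D}
  one_mem' v hv := by simpa using hv
  mul_mem' {A B} hA hB := by simpa [Function.comp_def, mulVec_mulVec] using hA.comp hB

theorem mem_mapsToSubmonoid [Semiring R] {D : Set (ι → R)} {A : Matrix ι ι R} :
    A ∈ mapsToSubmonoid D ↔ MapsTo (A *ᵥ ·) D D :=
  Iff.rfl

theorem image_mulVec_eq_iff_mem_units_mapsToSubmonoid [Semiring R] {D : Set (ι → R)}
    {g : (Matrix ι ι R)ˣ} :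
    (fun v => (g : Matrix ι ι R) *ᵥ v) '' D = D ↔ g ∈ (mapsToSubmonoid D).units := by
  rw [Submonoid.mem_units_iff, mem_mapsToSubmonoid, mem_mapsToSubmonoid]
  constructor
  · intro hg
    refine ⟨fun v hv => hg.subset (mem_image_of_mem _ hv), fun v hv => ?_⟩
    obtain ⟨w, hw, rfl⟩ := hg.symm ▸ hv
    simpa [mulVec_mulVec] using hw
  · rintro ⟨hg, hginv⟩
    exact hg.image_subset.antisymm fun v hv => ⟨_, hginv hv, by simp [mulVec_mulVec]⟩

theorem isClosed_mapsToSubmonoid [Semiring R] [TopologicalSpace R] [IsTopologicalSemiring R]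
    {D : Set (ι → R)} (hD : IsClosed D) :
    IsClosed (mapsToSubmonoid D : Set (Matrix ι ι R)) := by
  have : (mapsToSubmonoid D : Set (Matrix ι ι R)) = ⋂ v ∈ D, (· *ᵥ v) ⁻¹' D := by
    ext A; simp [mem_mapsToSubmonoid, MapsTo]
  rw [this]
  exact isClosed_biInter fun v _ =>
    hD.preimage (continuous_id.matrix_mulVec continuous_const)

theorem isCompact_mapsToSubmonoid [NormedField R] [ProperSpace R] {D : Set (ι → R)}
    (hD : IsCompact D) (hspan : Submodule.span R D = ⊤) :
    IsCompact (mapsToSubmonoid D : Set (Matrix ι ι R)) := by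
  have hcol (j : ι) : ∃ C, ∀ A ∈ mapsToSubmonoid D, ‖A.col j‖ ≤ C := by
    obtain ⟨C, hC⟩ := Submodule.exists_norm_apply_le_of_mem_span hD.isBounded
      (hspan ▸ Submodule.mem_top : Pi.single j (1 : R) ∈ Submodule.span R D)
    refine ⟨C, fun A hA => ?_⟩
    simpa only [mulVecLin_apply, mulVec_single_one] using hC A.mulVecLin hA
  choose C hC using hcol
  have hbox : IsCompact (univ.pi fun _ : ι => univ.pi fun j : ι =>
      Metric.closedBall (0 : R) (C j) : Set (Matrix ι ι R)) :=
    isCompact_univ_pi fun _ => isCompact_univ_pi fun _ => isCompact_closedBall _ _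
  refine hbox.of_isClosed_subset (isClosed_mapsToSubmonoid hD.isClosed) fun (A : Matrix ι ι R) hA i _ j _ => ?_
  simpa using (norm_le_pi_norm (A.col j) i).trans (hC j A hA)

end Matrix

theorem compact_stabilizer_of_compact_spanning_set_general
    {k : Type*} [NontriviallyNormedField k] [LocallyCompactSpace k]
    {n : ℕ} (D : Set (Fin n → k)) (hD : IsCompact D)
    (hspan : Submodule.span k D = ⊤) :
    ∃ S : Subgroup (Matrix.GeneralLinearGroup (Fin n) k),
      (S : Set (Matrix.GeneralLinearGroup (Fin n) k)) =
        {g : Matrix.GeneralLinearGroup (Fin n) k |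
          (fun v => Matrix.mulVec (g : Matrix (Fin n) (Fin n) k) v) '' D = D} ∧
      IsCompact (S : Set (Matrix.GeneralLinearGroup (Fin n) k)) := by
  have : ProperSpace k := .of_locallyCompactSpace k
  refine ⟨(Matrix.mapsToSubmonoid D).units, ?_, ?_⟩
  · ext g
    exact Matrix.image_mulVec_eq_iff_mem_units_mapsToSubmonoid.symm
  · exact Submonoid.units_isCompact (Matrix.isCompact_mapsToSubmonoid hD hspan)

/-- Let `k` be a local field (a field with a nontrivial absolute value, complete and
locally compact) and let `D ⊆ kⁿ` be a compact subset spanning `kⁿ`. Then the setwise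
stabilizer `{g ∈ GLₙ(k) : g·D = D}` is a compact subgroup of `GLₙ(k)`. -/
theorem compact_stabilizer_of_compact_spanning_set
    {k : Type*} [NontriviallyNormedField k] [CompleteSpace k] [LocallyCompactSpace k]
    {n : ℕ} (D : Set (Fin n → k)) (hD : IsCompact D)
    (hspan : Submodule.span k D = ⊤) :
    ∃ S : Subgroup (Matrix.GeneralLinearGroup (Fin n) k),
      (S : Set (Matrix.GeneralLinearGroup (Fin n) k)) =
        {g : Matrix.GeneralLinearGroup (Fin n) k |
          (fun v => Matrix.mulVec (g : Matrix (Fin n) (Fin n) k) v) '' D = D} ∧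
      IsCompact (S : Set (Matrix.GeneralLinearGroup (Fin n) k)) :=
  compact_stabilizer_of_compact_spanning_set_general D hD hspan
end
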